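/- Let ρ ∈ ℰ¹ and e ∈ ℜ_ρ(ℰ). Then: (i) for every u ∈ Γ with ⟨ρ, u⟩ > 0 one has u + e ∈ Γ; (ii) there exists a unique K-derivation ∂_e of A such that ∂_e(χ^u) = ⟨ρ, u⟩ χ^{u+e} for every u ∈ Γ with ⟨ρ, u⟩ > 0 and ∂_e(χ^u) = 0 for every u ∈ Γ with ⟨ρ, u⟩ = 0; moreover ∂_e is homogeneous of degree e, i.e. it maps K·χ^u into K·χ^{u+e} for every u ∈ Γ. -/

import Mathlib

open scoped BigOperators

namespace RootSubgroups

/-- The natural pairing on `ℚⁿ`, identifying `N_ℚ` with the dual of `M_ℚ`. -/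
def pairQ {n : ℕ} (q v : Fin n → ℚ) : ℚ := ∑ i, q i * v i

/-- A vector of `M_ℚ = ℚⁿ` is a lattice point (lies in `M = ℤⁿ`) if all its
coordinates are integers. -/
def IsLatticePt {n : ℕ} (v : Fin n → ℚ) : Prop := ∀ i, ∃ z : ℤ, v i = (z : ℚ)

/-- The convex cone generated by a set `S ⊆ ℚⁿ`: all finite nonnegative
rational combinations of elements of `S`. -/
def coneHull {n : ℕ} (S : Set (Fin n → ℚ)) : Set (Fin n → ℚ) :=
  {x | ∃ (F : Finset (Fin n → ℚ)) (c : (Fin n → ℚ) → ℚ),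
      (F : Set (Fin n → ℚ)) ⊆ S ∧ (∀ v, 0 ≤ c v) ∧ x = ∑ v ∈ F, c v • v}

/-- A finitely generated convex cone: the cone generated by a finite set. -/
def IsFGCone {n : ℕ} (C : Set (Fin n → ℚ)) : Prop :=
  ∃ S : Finset (Fin n → ℚ), C = coneHull (S : Set (Fin n → ℚ))

/-- The dual cone `ℰ = 𝒢^∨ = {q : ⟨q, v⟩ ≥ 0 for all v ∈ 𝒢}`. -/
def dualCone {n : ℕ} (C : Set (Fin n → ℚ)) : Set (Fin n → ℚ) :=
  {q | ∀ v ∈ C, 0 ≤ pairQ q v}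

/-- A face of the dual cone `ℰ = C^∨`: a subset of the form
`{q ∈ ℰ : ⟨q, v⟩ = 0}` for some `v ∈ C`. -/
def IsFaceOfDual {n : ℕ} (C F : Set (Fin n → ℚ)) : Prop :=
  ∃ v ∈ C, F = {q ∈ dualCone C | pairQ q v = 0}

/-- The ray `ℚ_{≥0}·ρ` spanned by a vector `ρ`. -/
def raySet {n : ℕ} (ρ : Fin n → ℚ) : Set (Fin n → ℚ) :=
  {x | ∃ c : ℚ, 0 ≤ c ∧ x = c • ρ}

/-- A lattice vector is primitive if it is not a positive integer multiple
`k·q` (`k ≠ 1`) of a lattice vector `q`. -/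
def IsPrimitive {n : ℕ} (ρ : Fin n → ℚ) : Prop :=
  IsLatticePt ρ ∧ ∀ (k : ℕ) (q : Fin n → ℚ), IsLatticePt q → ρ = (k : ℚ) • q → k = 1

/-- `ℰ¹`: the set of primitive lattice vectors `ρ ∈ N` such that `ℚ_{≥0}·ρ` is
a ray (one-dimensional face) of the dual cone `ℰ = C^∨`. -/
def E1 {n : ℕ} (C : Set (Fin n → ℚ)) : Set (Fin n → ℚ) :=
  {ρ | IsPrimitive ρ ∧ IsFaceOfDual C (raySet ρ)}

/-- The Demazure roots of `ℰ = C^∨` at `ρ ∈ ℰ¹`: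
`ℜ_ρ(ℰ) = {e ∈ M : ⟨ρ, e⟩ = −1 and ⟨ρ', e⟩ ≥ 0 for all ρ' ∈ ℰ¹ \ {ρ}}`. -/
def DemRootsAt {n : ℕ} (C : Set (Fin n → ℚ)) (ρ : Fin n → ℚ) : Set (Fin n → ℚ) :=
  {e | IsLatticePt e ∧ pairQ ρ e = -1 ∧ ∀ ρ' ∈ E1 C, ρ' ≠ ρ → 0 ≤ pairQ ρ' e}

/-- The set `ℜ(ℰ)` of all Demazure roots of `ℰ = C^∨`. -/
def DemRoots {n : ℕ} (C : Set (Fin n → ℚ)) : Set (Fin n → ℚ) :=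
  ⋃ ρ ∈ E1 C, DemRootsAt C ρ

/-- A face of the cone `C`: a subset of the form `{v ∈ C : ⟨q, v⟩ = 0}` for
some `q` in the dual cone of `C`. -/
def IsFaceOfCone {n : ℕ} (C F : Set (Fin n → ℚ)) : Prop :=
  ∃ q ∈ dualCone C, F = {v ∈ C | pairQ q v = 0}

/-- A facet of the cone `C`: a face whose linear span has codimension one in
the linear span of `C`. -/
def IsFacetOfCone {n : ℕ} (C F : Set (Fin n → ℚ)) : Prop :=
  IsFaceOfCone C F ∧
    Module.finrank ℚ ↥(Submodule.span ℚ F) + 1 = Module.finrank ℚ ↥(Submodule.span ℚ C)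

end RootSubgroups

namespace RootSubgroups

variable {n : ℕ}

theorem pairQ_comm (q v : Fin n → ℚ) : pairQ q v = pairQ v q :=
  Finset.sum_congr rfl fun i _ => mul_comm _ _

/-- `pairQ q` as a linear map in the second variable. -/
def pairL (q : Fin n → ℚ) : (Fin n → ℚ) →ₗ[ℚ] ℚ where
  toFun v := pairQ q v
  map_add' v w := by
    simp only [pairQ, Pi.add_apply, mul_add]
    exact Finset.sum_add_distrib
  map_smul' c v := by
    simp only [pairQ, Pi.smul_apply, smul_eq_mul, RingHom.id_apply, Finset.mul_sum]
    exact Finset.sum_congr rfl fun i _ => by ring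

@[simp] theorem pairL_apply (q v : Fin n → ℚ) : pairL q v = pairQ q v := rfl

theorem pairQ_add_right (q v w : Fin n → ℚ) : pairQ q (v + w) = pairQ q v + pairQ q w :=
  map_add (pairL q) v w

theorem pairQ_smul_right (q : Fin n → ℚ) (c : ℚ) (v : Fin n → ℚ) :
    pairQ q (c • v) = c * pairQ q v := by
  have := map_smul (pairL q) c v
  simp only [pairL_apply, smul_eq_mul] at this
  exact this

theorem pairQ_zero_right (q : Fin n → ℚ) : pairQ q 0 = 0 := map_zero (pairL q)

theorem pairQ_sub_right (q v w : Fin n → ℚ) : pairQ q (v - w) = pairQ q v - pairQ q w :=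
  map_sub (pairL q) v w

theorem pairQ_sum_right {ι : Type*} (q : Fin n → ℚ) (F : Finset ι) (g : ι → Fin n → ℚ) :
    pairQ q (∑ i ∈ F, g i) = ∑ i ∈ F, pairQ q (g i) :=
  map_sum (pairL q) g F

theorem pairQ_add_left (q r v : Fin n → ℚ) : pairQ (q + r) v = pairQ q v + pairQ r v := by
  rw [pairQ_comm, pairQ_add_right, pairQ_comm v q, pairQ_comm v r]

theorem pairQ_smul_left (c : ℚ) (q v : Fin n → ℚ) : pairQ (c • q) v = c * pairQ q v := by
  rw [pairQ_comm, pairQ_smul_right, pairQ_comm v q]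

theorem pairQ_sub_left (q r v : Fin n → ℚ) : pairQ (q - r) v = pairQ q v - pairQ r v := by
  rw [pairQ_comm, pairQ_sub_right, pairQ_comm v q, pairQ_comm v r]

theorem pairQ_zero_left (v : Fin n → ℚ) : pairQ 0 v = 0 := by
  rw [pairQ_comm, pairQ_zero_right]

theorem pairQ_neg_left (q v : Fin n → ℚ) : pairQ (-q) v = -pairQ q v := by
  have := pairQ_smul_left (-1 : ℚ) q v
  simpa using this

theorem pairQ_sum_left {ι : Type*} (F : Finset ι) (g : ι → Fin n → ℚ) (v : Fin n → ℚ) :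
    pairQ (∑ i ∈ F, g i) v = ∑ i ∈ F, pairQ (g i) v := by
  rw [pairQ_comm, pairQ_sum_right]
  exact Finset.sum_congr rfl fun i _ => pairQ_comm _ _

theorem pairQ_self_nonneg (q : Fin n → ℚ) : 0 ≤ pairQ q q :=
  Finset.sum_nonneg fun i _ => mul_self_nonneg _

theorem eq_zero_of_pairQ_self {q : Fin n → ℚ} (h : pairQ q q = 0) : q = 0 := by
  funext i
  have h2 := (Finset.sum_eq_zero_iff_of_nonneg (fun i _ => mul_self_nonneg (q i))).1 h i
    (Finset.mem_univ i)
  exact mul_self_eq_zero.mp h2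

/-! ### coneHull lemmas -/

theorem zero_mem_coneHull (S : Set (Fin n → ℚ)) : (0 : Fin n → ℚ) ∈ coneHull S :=
  ⟨∅, fun _ => 0, by simp, fun _ => le_refl 0, by simp⟩

theorem subset_coneHull (S : Set (Fin n → ℚ)) {v : Fin n → ℚ} (hv : v ∈ S) : v ∈ coneHull S := by
  classical
  refine ⟨{v}, fun w => if w = v then 1 else 0, by simpa, fun w => by dsimp only; split <;> norm_num, ?_⟩
  simp

theorem smul_mem_coneHull {S : Set (Fin n → ℚ)} {x : Fin n → ℚ} {c : ℚ} (hc : 0 ≤ c)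
    (hx : x ∈ coneHull S) : c • x ∈ coneHull S := by
  obtain ⟨F, d, hF, hd, rfl⟩ := hx
  refine ⟨F, fun v => c * d v, hF, fun v => mul_nonneg hc (hd v), ?_⟩
  rw [Finset.smul_sum]
  exact Finset.sum_congr rfl fun v _ => (smul_smul c (d v) v)

theorem add_mem_coneHull {S : Set (Fin n → ℚ)} {x y : Fin n → ℚ}
    (hx : x ∈ coneHull S) (hy : y ∈ coneHull S) : x + y ∈ coneHull S := by
  classical
  obtain ⟨F₁, c₁, hF₁, hc₁, rfl⟩ := hx
  obtain ⟨F₂, c₂, hF₂, hc₂, rfl⟩ := hy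
  refine ⟨F₁ ∪ F₂, fun v => (if v ∈ F₁ then c₁ v else 0) + (if v ∈ F₂ then c₂ v else 0),
    ?_, fun v => add_nonneg (by by_cases h : v ∈ F₁ <;> simp [h, hc₁ v])
      (by by_cases h : v ∈ F₂ <;> simp [h, hc₂ v]), ?_⟩
  · rw [Finset.coe_union]
    exact Set.union_subset hF₁ hF₂
  · have e1 : ∑ v ∈ F₁ ∪ F₂, (if v ∈ F₁ then c₁ v else 0) • v = ∑ v ∈ F₁, c₁ v • v := by
      rw [← Finset.sum_subset (Finset.subset_union_left (s₂ := F₂))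
        (fun v _ hv => by simp [hv])]
      exact Finset.sum_congr rfl fun v hv => by simp [hv]
    have e2 : ∑ v ∈ F₁ ∪ F₂, (if v ∈ F₂ then c₂ v else 0) • v = ∑ v ∈ F₂, c₂ v • v := by
      rw [← Finset.sum_subset (Finset.subset_union_right (s₁ := F₁))
        (fun v _ hv => by simp [hv])]
      exact Finset.sum_congr rfl fun v hv => by simp [hv]
    rw [← e1, ← e2, ← Finset.sum_add_distrib]
    exact Finset.sum_congr rfl fun v _ => (add_smul _ _ _).symm

theorem sum_smul_mem_coneHull {S : Set (Fin n → ℚ)} {ι : Type*} {F : Finset ι} {c : ι → ℚ}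
    {g : ι → Fin n → ℚ} (hc : ∀ i ∈ F, 0 ≤ c i) (hg : ∀ i ∈ F, g i ∈ coneHull S) :
    (∑ i ∈ F, c i • g i) ∈ coneHull S := by
  classical
  induction F using Finset.induction_on with
  | empty => simpa using zero_mem_coneHull S
  | insert a F' hnotmem ih =>
    rw [Finset.sum_insert hnotmem]
    exact add_mem_coneHull
      (smul_mem_coneHull (hc a (Finset.mem_insert_self a F'))
        (hg a (Finset.mem_insert_self a F')))
      (ih (fun i hi => hc i (Finset.mem_insert_of_mem hi))
        (fun i hi => hg i (Finset.mem_insert_of_mem hi)))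

theorem coneHull_subset_coneHull {S T : Set (Fin n → ℚ)}
    (h : ∀ y ∈ T, y ∈ coneHull S) : coneHull T ⊆ coneHull S := by
  rintro x ⟨F, c, hF, hc, rfl⟩
  exact sum_smul_mem_coneHull (fun v _ => hc v) (fun v hv => h v (hF hv))

theorem coneHull_mono {S T : Set (Fin n → ℚ)} (h : S ⊆ T) : coneHull S ⊆ coneHull T :=
  coneHull_subset_coneHull fun y hy => subset_coneHull T (h hy)

theorem mem_span_of_mem_coneHull {S : Set (Fin n → ℚ)} {x : Fin n → ℚ}
    (h : x ∈ coneHull S) : x ∈ Submodule.span ℚ S := by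
  obtain ⟨F, c, hF, hc, rfl⟩ := h
  exact Submodule.sum_mem _ fun v hv =>
    Submodule.smul_mem _ _ (Submodule.subset_span (hF hv))

/-! ### dual cone over a finite generating set -/

theorem mem_dualCone_coneHull_iff (S : Finset (Fin n → ℚ)) (q : Fin n → ℚ) :
    q ∈ dualCone (coneHull (S : Set (Fin n → ℚ))) ↔ ∀ v ∈ S, 0 ≤ pairQ q v := by
  constructor
  · intro h v hv
    exact h v (subset_coneHull _ hv)
  · rintro h x ⟨F, c, hF, hc, rfl⟩
    rw [pairQ_sum_right]
    refine Finset.sum_nonneg fun v hv => ?_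
    rw [pairQ_smul_right]
    exact mul_nonneg (hc v) (h v (hF hv))

theorem eq_zero_of_perp (S : Finset (Fin n → ℚ))
    (hfull : Submodule.span ℚ (coneHull (S : Set (Fin n → ℚ))) = ⊤)
    {p : Fin n → ℚ} (h : ∀ v ∈ S, pairQ p v = 0) : p = 0 := by
  have hspan : Submodule.span ℚ (S : Set (Fin n → ℚ)) = ⊤ := by
    rw [eq_top_iff, ← hfull]
    exact Submodule.span_le.2 fun x hx => mem_span_of_mem_coneHull hx
  have hker : Submodule.span ℚ (S : Set (Fin n → ℚ)) ≤ LinearMap.ker (pairL p) :=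
    Submodule.span_le.2 fun v hv => LinearMap.mem_ker.2 (h v hv)
  rw [hspan] at hker
  have : pairQ p p = 0 := hker (Submodule.mem_top (x := p))
  exact eq_zero_of_pairQ_self this

/-! ### Farkas lemma -/

theorem farkas_aux : ∀ (N : ℕ) (S : Finset (Fin n → ℚ)), S.card ≤ N →
    ∀ x : Fin n → ℚ, x ∉ coneHull (S : Set (Fin n → ℚ)) →
    ∃ q : Fin n → ℚ, (∀ v ∈ S, 0 ≤ pairQ q v) ∧ pairQ q x < 0 := by
  intro N
  induction N with
  | zero =>
    intro S hS x hx
    have hSe : S = ∅ := Finset.card_eq_zero.1 (Nat.le_zero.1 hS)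
    subst hSe
    refine ⟨-x, by simp, ?_⟩
    have hx0 : x ≠ 0 := fun h => hx (h ▸ zero_mem_coneHull _)
    have hpos : 0 < pairQ x x :=
      lt_of_le_of_ne (pairQ_self_nonneg x) (fun h => hx0 (eq_zero_of_pairQ_self h.symm))
    rw [pairQ_neg_left]
    linarith
  | succ N IH =>
    intro S hS x hx
    rcases Nat.lt_or_ge S.card (N + 1) with h | h
    · exact IH S (Nat.lt_succ_iff.1 h) x hx
    have hcard : S.card = N + 1 := le_antisymm hS h
    have hne : S.Nonempty := Finset.card_pos.1 (by omega)
    obtain ⟨a, ha⟩ := hne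
    classical
    set S₀ := S.erase a with hS₀def
    have hS₀card : S₀.card = N := by
      rw [hS₀def, Finset.card_erase_of_mem ha, hcard]
      omega
    have hS0sub : (S₀ : Set (Fin n → ℚ)) ⊆ (S : Set (Fin n → ℚ)) := by
      intro v hv; exact Finset.erase_subset a S hv
    have hx0 : x ∉ coneHull (S₀ : Set (Fin n → ℚ)) := fun h => hx (coneHull_mono hS0sub h)
    obtain ⟨q₀, hq₀S, hq₀x⟩ := IH S₀ (le_of_eq hS₀card) x hx0
    by_cases hqa : 0 ≤ pairQ q₀ a
    · refine ⟨q₀, fun v hv => ?_, hq₀x⟩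
      rcases eq_or_ne v a with rfl | hva
      · exact hqa
      · exact hq₀S v (Finset.mem_erase.2 ⟨hva, hv⟩)
    · push_neg at hqa
      set r : (Fin n → ℚ) → ℚ := fun y => pairQ q₀ y / pairQ q₀ a with hr
      set π : (Fin n → ℚ) → (Fin n → ℚ) := fun y => y - r y • a with hπ
      set S₁ := S₀.image π with hS₁def
      have hS₁card : S₁.card ≤ N := le_trans (Finset.card_image_le) (le_of_eq hS₀card)
      have hq₀a_ne : pairQ q₀ a ≠ 0 := ne_of_lt hqa
      have hπpair : ∀ (p y : Fin n → ℚ), pairQ p (π y) = pairQ p y - r y * pairQ p a := by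
        intro p y
        rw [hπ]
        simp only
        rw [pairQ_sub_right, pairQ_smul_right]
      have hx₁ : π x ∉ coneHull (S₁ : Set (Fin n → ℚ)) := by
        intro hmem
        apply hx
        have hsub : coneHull (S₁ : Set (Fin n → ℚ)) ⊆ coneHull (S : Set (Fin n → ℚ)) := by
          apply coneHull_subset_coneHull
          intro y hy
          rw [hS₁def, Finset.coe_image] at hy
          obtain ⟨v, hv, rfl⟩ := hy
          have hrv : r v ≤ 0 :=
            div_nonpos_of_nonneg_of_nonpos (hq₀S v hv) (le_of_lt hqa)
          have hre : π v = v + (-(r v)) • a := by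
            rw [hπ]; simp [sub_eq_add_neg, neg_smul]
          rw [hre]
          exact add_mem_coneHull (subset_coneHull _ (hS0sub hv))
            (smul_mem_coneHull (neg_nonneg.2 hrv) (subset_coneHull _ ha))
        have hxa : x = π x + r x • a := by
          rw [hπ]; simp
        have hrx : 0 ≤ r x := le_of_lt (div_pos_of_neg_of_neg hq₀x hqa)
        rw [hxa]
        exact add_mem_coneHull (hsub hmem)
          (smul_mem_coneHull hrx (subset_coneHull _ ha))
      obtain ⟨q₁, hq₁S, hq₁x⟩ := IH S₁ hS₁card (π x) hx₁
      refine ⟨q₁ - (pairQ q₁ a / pairQ q₀ a) • q₀, fun v hv => ?_, ?_⟩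
      · rcases eq_or_ne v a with rfl | hva
        · rw [pairQ_sub_left, pairQ_smul_left, div_mul_cancel₀ _ hq₀a_ne, sub_self]
        · have hv₀ : v ∈ S₀ := Finset.mem_erase.2 ⟨hva, hv⟩
          have h1 := hq₁S (π v) (Finset.mem_image_of_mem π hv₀)
          rw [hπpair, hr] at h1
          rw [pairQ_sub_left, pairQ_smul_left]
          have hrw : pairQ q₁ a / pairQ q₀ a * pairQ q₀ v
              = pairQ q₀ v / pairQ q₀ a * pairQ q₁ a := by
            field_simp
          rw [hrw]
          exact h1
      · rw [hπpair, hr] at hq₁x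
        rw [pairQ_sub_left, pairQ_smul_left]
        have hrw : pairQ q₁ a / pairQ q₀ a * pairQ q₀ x
            = pairQ q₀ x / pairQ q₀ a * pairQ q₁ a := by
          field_simp
        rw [hrw]
        exact hq₁x

theorem farkas (S : Finset (Fin n → ℚ)) (x : Fin n → ℚ)
    (hx : x ∉ coneHull (S : Set (Fin n → ℚ))) :
    ∃ q : Fin n → ℚ, (∀ v ∈ S, 0 ≤ pairQ q v) ∧ pairQ q x < 0 :=
  farkas_aux S.card S le_rfl x hx

/-! ### primitive scaling -/

theorem exists_primitive (q : Fin n → ℚ) (hq : q ≠ 0) :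
    ∃ (ρ : Fin n → ℚ) (μ : ℚ), 0 < μ ∧ q = μ • ρ ∧ IsPrimitive ρ := by
  classical
  have hi0 : ∃ i, q i ≠ 0 := by
    by_contra hcon
    push_neg at hcon
    exact hq (funext hcon)
  obtain ⟨i₀, hi₀⟩ := hi0
  set D : ℤ := ∏ i, ((q i).den : ℤ) with hD
  have hD_pos : 0 < D := Finset.prod_pos fun i _ => Int.natCast_pos.2 (q i).pos
  have hDQ_pos : (0 : ℚ) < (D : ℚ) := by exact_mod_cast hD_pos
  set z : Fin n → ℤ := fun i => (q i).num * (D / ((q i).den : ℤ)) with hz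
  have hzq : ∀ i, (z i : ℚ) = q i * (D : ℚ) := by
    intro i
    obtain ⟨k, hk⟩ : ((q i).den : ℤ) ∣ D := Finset.dvd_prod_of_mem _ (Finset.mem_univ i)
    have hden0 : ((q i).den : ℤ) ≠ 0 := by exact_mod_cast (q i).den_nz
    have : z i = (q i).num * k := by
      rw [hz]; simp only
      rw [hk, Int.mul_ediv_cancel_left _ hden0]
    have hdenQ : ((q i).den : ℚ) ≠ 0 := by exact_mod_cast (q i).den_nz
    have hnd : ((q i).num : ℚ) = q i * ((q i).den : ℚ) :=
      (div_eq_iff hdenQ).1 (Rat.num_div_den (q i))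
    rw [this, hk]
    push_cast
    rw [hnd]
    ring
  set g : ℤ := Finset.univ.gcd z with hg
  have hz₀ : z i₀ ≠ 0 := by
    intro h0
    have : (z i₀ : ℚ) = 0 := by exact_mod_cast h0
    rw [hzq i₀] at this
    exact hi₀ (by
      rcases mul_eq_zero.1 this with h | h
      · exact h
      · exact absurd h (ne_of_gt hDQ_pos))
  have hg_ne : g ≠ 0 := by
    intro h0
    exact hz₀ ((Finset.gcd_eq_zero_iff.1 (hg ▸ h0)) i₀ (Finset.mem_univ i₀))
  have hg_nonneg : 0 ≤ g :=
    Int.nonneg_of_normalize_eq_self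
      (Finset.normalize_gcd (s := (Finset.univ : Finset (Fin n))) (f := z))
  have hg_pos : 0 < g := lt_of_le_of_ne hg_nonneg (Ne.symm hg_ne)
  have hgQ_pos : (0 : ℚ) < (g : ℚ) := by exact_mod_cast hg_pos
  obtain ⟨y, hy1, hy2⟩ := Finset.extract_gcd z ⟨i₀, Finset.mem_univ i₀⟩
  refine ⟨fun i => ((y i : ℤ) : ℚ), (g : ℚ) / (D : ℚ), div_pos hgQ_pos hDQ_pos, ?_, ?_, ?_⟩
  · funext i
    have h1 : (z i : ℚ) = (g : ℚ) * (y i : ℚ) := by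
      exact_mod_cast congrArg (fun t : ℤ => (t : ℚ)) (hy1 i (Finset.mem_univ i))
    have h2 := hzq i
    simp only [Pi.smul_apply, smul_eq_mul]
    rw [h1] at h2
    field_simp at h2 ⊢
    linarith [h2]
  · intro i
    exact ⟨y i, rfl⟩
  · intro k q₀ hq₀ hkq₀
    choose w hw using hq₀
    have hyk : ∀ i, y i = (k : ℤ) * w i := by
      intro i
      have := congrFun hkq₀ i
      simp only [Pi.smul_apply, smul_eq_mul, hw i] at this
      exact_mod_cast this
    have hdvd : (k : ℤ) ∣ Finset.univ.gcd y :=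
      Finset.dvd_gcd fun i _ => ⟨w i, hyk i⟩
    rw [hy2] at hdvd
    have := Int.isUnit_iff.1 (isUnit_of_dvd_one hdvd)
    omega

/-! ### every element of the dual cone is a nonnegative combination of E1 -/

theorem dual_subset_coneHull_E1 (S : Finset (Fin n → ℚ)) (C : Set (Fin n → ℚ))
    (hC : C = coneHull (S : Set (Fin n → ℚ))) (hfull : Submodule.span ℚ C = ⊤) :
    ∀ q : Fin n → ℚ, (∀ v ∈ S, 0 ≤ pairQ q v) → q ∈ coneHull (E1 C) := by
  classical
  have hfullS : Submodule.span ℚ (coneHull (S : Set (Fin n → ℚ))) = ⊤ := hC ▸ hfull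
  suffices H : ∀ (N : ℕ) (q : Fin n → ℚ), (∀ v ∈ S, 0 ≤ pairQ q v) →
      (S.filter fun v => pairQ q v ≠ 0).card ≤ N → q ∈ coneHull (E1 C) by
    intro q hq
    exact H _ q hq le_rfl
  intro N
  induction N with
  | zero =>
    intro q hq hcard
    have hzero : ∀ v ∈ S, pairQ q v = 0 := by
      intro v hv
      by_contra hne
      have : v ∈ S.filter fun v => pairQ q v ≠ 0 := Finset.mem_filter.2 ⟨hv, hne⟩
      have := Finset.card_pos.2 ⟨v, this⟩
      omega
    have : q = 0 := eq_zero_of_perp S hfullS hzero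
    rw [this]
    exact zero_mem_coneHull _
  | succ N IH =>
    intro q hq hcard
    by_cases hz : ∀ v ∈ S, pairQ q v = 0
    · rw [eq_zero_of_perp S hfullS hz]
      exact zero_mem_coneHull _
    push_neg at hz
    obtain ⟨v₂, hv₂S, hv₂⟩ := hz
    have hqne : q ≠ 0 := by
      intro h0
      exact hv₂ (h0 ▸ pairQ_zero_left v₂)
    by_cases hB : ∀ p : Fin n → ℚ, (∀ v ∈ S, pairQ q v = 0 → pairQ p v = 0) → ∃ c : ℚ, p = c • q
    · -- extreme ray case
      obtain ⟨ρ', μ, hμ, hqμ, hprim⟩ := exists_primitive q hqne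
      have hqdual : q ∈ dualCone C := by
        rw [hC]
        exact (mem_dualCone_coneHull_iff S q).2 hq
      have hρ'q : ρ' = μ⁻¹ • q := by
        rw [hqμ, smul_smul, inv_mul_cancel₀ (ne_of_gt hμ), one_smul]
      have hρ'dual : ρ' ∈ dualCone C := by
        rw [hρ'q]
        intro v hv
        rw [pairQ_smul_left]
        exact mul_nonneg (inv_nonneg.2 hμ.le) (hqdual v hv)
      have hρ'pair : ∀ v, pairQ ρ' v = μ⁻¹ * pairQ q v := by
        intro v; rw [hρ'q, pairQ_smul_left]
      set Z : Finset (Fin n → ℚ) := S.filter fun v => pairQ q v = 0 with hZ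
      set vstar : Fin n → ℚ := ∑ v ∈ Z, v with hvstar
      have hSC : ∀ v ∈ S, v ∈ C := by
        intro v hv
        rw [hC]
        exact subset_coneHull _ hv
      have hvstarC : vstar ∈ C := by
        rw [hC, hvstar]
        have : (∑ v ∈ Z, v) = ∑ v ∈ Z, (1:ℚ) • v := by simp
        rw [this]
        exact sum_smul_mem_coneHull (fun v _ => zero_le_one)
          (fun v hv => subset_coneHull _ (Finset.mem_filter.1 hv).1)
      have hface : raySet ρ' = {p ∈ dualCone C | pairQ p vstar = 0} := by
        ext p
        constructor
        · rintro ⟨c, hc, rfl⟩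
          refine ⟨?_, ?_⟩
          · intro v hv
            rw [pairQ_smul_left]
            exact mul_nonneg hc (hρ'dual v hv)
          · rw [hvstar, pairQ_smul_left, pairQ_sum_right]
            have : ∀ v ∈ Z, pairQ ρ' v = 0 := by
              intro v hv
              rw [hρ'pair, (Finset.mem_filter.1 hv).2, mul_zero]
            rw [Finset.sum_congr rfl this]
            simp
        · rintro ⟨hp, hpv⟩
          have hpZ : ∀ v ∈ Z, pairQ p v = 0 := by
            rw [hvstar, pairQ_sum_right] at hpv
            intro v hv
            exact (Finset.sum_eq_zero_iff_of_nonneg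
              (fun w hw => hp w (hSC w (Finset.mem_filter.1 hw).1))).1 hpv v hv
          obtain ⟨c, rfl⟩ := hB p (fun v hv h0 =>
            hpZ v (Finset.mem_filter.2 ⟨hv, h0⟩))
          have hqv₂pos : 0 < pairQ q v₂ := lt_of_le_of_ne (hq v₂ hv₂S) (Ne.symm hv₂)
          have hcnn : 0 ≤ c := by
            have := hp v₂ (hSC v₂ hv₂S)
            rw [pairQ_smul_left] at this
            by_contra hneg
            push_neg at hneg
            nlinarith
          exact ⟨c * μ, mul_nonneg hcnn hμ.le, by rw [mul_smul, ← hqμ]⟩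
      have hE1 : ρ' ∈ E1 C := ⟨hprim, vstar, hvstarC, hface⟩
      rw [hqμ]
      exact smul_mem_coneHull hμ.le (subset_coneHull _ hE1)
    · -- interior-direction case: split q
      push_neg at hB
      obtain ⟨w, hwZ, hwq⟩ := hB
      set NZ : Finset (Fin n → ℚ) := S.filter fun v => pairQ q v ≠ 0 with hNZ
      have hNZne : NZ.Nonempty := ⟨v₂, Finset.mem_filter.2 ⟨hv₂S, hv₂⟩⟩
      have hNZpos : ∀ v ∈ NZ, 0 < pairQ q v := by
        intro v hv
        obtain ⟨hvS, hvne⟩ := Finset.mem_filter.1 hv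
        exact lt_of_le_of_ne (hq v hvS) (Ne.symm hvne)
      set lam : ℚ := NZ.sup' hNZne fun v => -pairQ w v / pairQ q v with hlam
      set w' : Fin n → ℚ := w + lam • q with hw'
      have hw'pair : ∀ v, pairQ w' v = pairQ w v + lam * pairQ q v := by
        intro v; rw [hw', pairQ_add_left, pairQ_smul_left]
      have hw'Z : ∀ v ∈ S, pairQ q v = 0 → pairQ w' v = 0 := by
        intro v hv h0
        rw [hw'pair, h0, hwZ v hv h0, mul_zero, add_zero]
      have hw'nn : ∀ v ∈ S, 0 ≤ pairQ w' v := by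
        intro v hv
        by_cases h0 : pairQ q v = 0
        · rw [hw'Z v hv h0]
        · have hvNZ : v ∈ NZ := Finset.mem_filter.2 ⟨hv, h0⟩
          have hlam_ge : -pairQ w v / pairQ q v ≤ lam := by
            rw [hlam]
            exact Finset.le_sup' (fun v => -pairQ w v / pairQ q v) hvNZ
          have hqv : 0 < pairQ q v := hNZpos v hvNZ
          rw [hw'pair]
          have := (div_le_iff₀ hqv).1 hlam_ge
          linarith
      obtain ⟨v₀, hv₀NZ, hv₀⟩ := Finset.exists_mem_eq_sup' hNZne
        (fun v => -pairQ w v / pairQ q v)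
      have hw'v₀ : pairQ w' v₀ = 0 := by
        have hle : lam = -pairQ w v₀ / pairQ q v₀ := hlam.trans hv₀
        rw [hw'pair, hle, div_mul_cancel₀ _ (ne_of_gt (hNZpos v₀ hv₀NZ))]
        ring
      have hNZcard : NZ.card ≤ N + 1 := hcard
      have hw'card : (S.filter fun v => pairQ w' v ≠ 0).card ≤ N := by
        have hsub : (S.filter fun v => pairQ w' v ≠ 0) ⊆ NZ.erase v₀ := by
          intro v hv
          obtain ⟨hvS, hvne⟩ := Finset.mem_filter.1 hv
          refine Finset.mem_erase.2 ⟨?_, ?_⟩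
          · intro heq; exact hvne (heq ▸ hw'v₀)
          · refine Finset.mem_filter.2 ⟨hvS, ?_⟩
            intro h0
            exact hvne (hw'Z v hvS h0)
        calc (S.filter fun v => pairQ w' v ≠ 0).card ≤ (NZ.erase v₀).card :=
              Finset.card_le_card hsub
          _ = NZ.card - 1 := Finset.card_erase_of_mem hv₀NZ
          _ ≤ N := by omega
      have hw'cone : w' ∈ coneHull (E1 C) := IH w' hw'nn hw'card
      have hPex : ∃ v₁ ∈ S, 0 < pairQ w' v₁ := by
        by_contra hcon
        push_neg at hcon
        have hall : ∀ v ∈ S, pairQ w' v = 0 :=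
          fun v hv => le_antisymm (hcon v hv) (hw'nn v hv)
        have : w' = 0 := eq_zero_of_perp S hfullS hall
        have : w = (-lam) • q := by
          rw [neg_smul, eq_neg_iff_add_eq_zero]
          exact this
        exact hwq (-lam) this
      obtain ⟨v₁', hv₁'S, hv₁'⟩ := hPex
      set P : Finset (Fin n → ℚ) := S.filter fun v => 0 < pairQ w' v with hP
      have hPne : P.Nonempty := ⟨v₁', Finset.mem_filter.2 ⟨hv₁'S, hv₁'⟩⟩
      have hPq : ∀ v ∈ P, 0 < pairQ q v := by
        intro v hv
        obtain ⟨hvS, hvpos⟩ := Finset.mem_filter.1 hv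
        rcases lt_or_eq_of_le (hq v hvS) with h | h
        · exact h
        · exact absurd (hw'Z v hvS h.symm) (ne_of_gt hvpos)
      set t : ℚ := P.inf' hPne fun v => pairQ q v / pairQ w' v with ht
      have ht_pos : 0 < t := by
        rw [ht, Finset.lt_inf'_iff]
        intro v hv
        exact div_pos (hPq v hv) (Finset.mem_filter.1 hv).2
      set qm : Fin n → ℚ := q - t • w' with hqm
      have hqmpair : ∀ v, pairQ qm v = pairQ q v - t * pairQ w' v := by
        intro v; rw [hqm, pairQ_sub_left, pairQ_smul_left]
      have hqmnn : ∀ v ∈ S, 0 ≤ pairQ qm v := by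
        intro v hv
        rw [hqmpair]
        by_cases hvP : 0 < pairQ w' v
        · have hvP' : v ∈ P := Finset.mem_filter.2 ⟨hv, hvP⟩
          have hle : t ≤ pairQ q v / pairQ w' v := by
            rw [ht]
            exact Finset.inf'_le (fun v => pairQ q v / pairQ w' v) hvP'
          have := (le_div_iff₀ hvP).1 hle
          linarith
        · have h0 : pairQ w' v = 0 := le_antisymm (not_lt.1 hvP) (hw'nn v hv)
          rw [h0, mul_zero, sub_zero]
          exact hq v hv
      obtain ⟨v₁, hv₁P, hv₁eq⟩ := Finset.exists_mem_eq_inf' hPne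
        (fun v => pairQ q v / pairQ w' v)
      have hqmv₁ : pairQ qm v₁ = 0 := by
        have hte : t = pairQ q v₁ / pairQ w' v₁ := ht.trans hv₁eq
        rw [hqmpair, hte,
          div_mul_cancel₀ _ (ne_of_gt (Finset.mem_filter.1 hv₁P).2)]
        ring
      have hv₁NZ : v₁ ∈ NZ := by
        refine Finset.mem_filter.2 ⟨(Finset.mem_filter.1 hv₁P).1, ?_⟩
        intro h0
        exact absurd (hw'Z v₁ (Finset.mem_filter.1 hv₁P).1 h0)
          (ne_of_gt (Finset.mem_filter.1 hv₁P).2)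
      have hqmcard : (S.filter fun v => pairQ qm v ≠ 0).card ≤ N := by
        have hsub : (S.filter fun v => pairQ qm v ≠ 0) ⊆ NZ.erase v₁ := by
          intro v hv
          obtain ⟨hvS, hvne⟩ := Finset.mem_filter.1 hv
          refine Finset.mem_erase.2 ⟨?_, ?_⟩
          · intro heq; exact hvne (heq ▸ hqmv₁)
          · refine Finset.mem_filter.2 ⟨hvS, ?_⟩
            intro h0
            apply hvne
            rw [hqmpair, h0, hw'Z v hvS h0, mul_zero, sub_zero]
        calc (S.filter fun v => pairQ qm v ≠ 0).card ≤ (NZ.erase v₁).card :=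
              Finset.card_le_card hsub
          _ = NZ.card - 1 := Finset.card_erase_of_mem hv₁NZ
          _ ≤ N := by omega
      have hqmcone : qm ∈ coneHull (E1 C) := IH qm hqmnn hqmcard
      have : q = qm + t • w' := by rw [hqm]; abel
      rw [this]
      exact add_mem_coneHull hqmcone (smul_mem_coneHull ht_pos.le hw'cone)

/-! ### part (i): root translation stays in the cone -/

theorem lattice_pairQ_int {p u : Fin n → ℚ} (hp : IsLatticePt p) (hu : IsLatticePt u) :
    ∃ z : ℤ, pairQ p u = (z : ℚ) := by
  choose a ha using hp
  choose b hb using hu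
  refine ⟨∑ i, a i * b i, ?_⟩
  rw [pairQ]
  push_cast
  exact Finset.sum_congr rfl fun i _ => by rw [ha i, hb i]

theorem mem_dualCone_of_mem_E1 {C : Set (Fin n → ℚ)} {ρ : Fin n → ℚ} (h : ρ ∈ E1 C) :
    ρ ∈ dualCone C := by
  obtain ⟨hprim, v, hvC, hface⟩ := h
  have hρ : ρ ∈ raySet ρ := ⟨1, zero_le_one, (one_smul ℚ ρ).symm⟩
  rw [hface] at hρ
  exact hρ.1

theorem root_translate (C : Set (Fin n → ℚ)) (S : Finset (Fin n → ℚ))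
    (hC : C = coneHull (S : Set (Fin n → ℚ))) (hfull : Submodule.span ℚ C = ⊤)
    (ρ e : Fin n → ℚ) (hρ : ρ ∈ E1 C) (he : e ∈ DemRootsAt C ρ)
    {u : Fin n → ℚ} (hu : u ∈ C) (hulat : IsLatticePt u) (hpos : 0 < pairQ ρ u) :
    IsLatticePt (u + e) ∧ u + e ∈ C := by
  obtain ⟨helat, hρe, hroots⟩ := he
  constructor
  · intro i
    obtain ⟨a, ha⟩ := hulat i
    obtain ⟨b, hb⟩ := helat i
    exact ⟨a + b, by rw [Pi.add_apply, ha, hb]; push_cast; ring⟩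
  · have hone : 1 ≤ pairQ ρ u := by
      obtain ⟨z, hz⟩ := lattice_pairQ_int hρ.1.1 hulat
      have hz0 : (0 : ℚ) < (z : ℚ) := hz ▸ hpos
      have hz1 : (1 : ℤ) ≤ z := by exact_mod_cast hz0
      rw [hz]
      exact_mod_cast hz1
    by_contra hmem
    rw [hC] at hmem
    obtain ⟨q, hqS, hqx⟩ := farkas S (u + e) hmem
    have hqE1 : q ∈ coneHull (E1 C) := dual_subset_coneHull_E1 S C hC hfull q hqS
    obtain ⟨F, c, hF, hcnn, hsum⟩ := hqE1
    have h0 : 0 ≤ pairQ q (u + e) := by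
      rw [hsum, pairQ_sum_left]
      refine Finset.sum_nonneg fun v hv => ?_
      rw [pairQ_smul_left]
      refine mul_nonneg (hcnn v) ?_
      have hvE1 : v ∈ E1 C := hF hv
      rw [pairQ_add_right]
      rcases eq_or_ne v ρ with rfl | hvρ
      · rw [hρe]; linarith
      · have h1 : 0 ≤ pairQ v u := mem_dualCone_of_mem_E1 hvE1 u hu
        have h2 : 0 ≤ pairQ v e := hroots v hvE1 hvρ
        linarith
    linarith

/-! ### the Demazure derivation -/

section Deriv

variable {K : Type*} [Field K] [CharZero K]
variable (Γ : AddSubmonoid (Fin n → ℚ)) (ρ e : Fin n → ℚ)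

/-- The image of the basis element `χ^u` under the Demazure derivation. -/
noncomputable def elems (hi : ∀ u : Γ, 0 < pairQ ρ (u : Fin n → ℚ) → (↑u + e : Fin n → ℚ) ∈ Γ)
    (u : Γ) : AddMonoidAlgebra K Γ :=
  if h : 0 < pairQ ρ (u : Fin n → ℚ) then
    AddMonoidAlgebra.single (⟨↑u + e, hi u h⟩ : Γ) ((pairQ ρ (u : Fin n → ℚ) : ℚ) : K)
  else 0

variable (K)
variable (hi : ∀ u : Γ, 0 < pairQ ρ (u : Fin n → ℚ) → (↑u + e : Fin n → ℚ) ∈ Γ)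

theorem elems_of_pos {u : Γ} (h : 0 < pairQ ρ (u : Fin n → ℚ)) :
    elems (K := K) Γ ρ e hi u =
      AddMonoidAlgebra.single (⟨↑u + e, hi u h⟩ : Γ) ((pairQ ρ (u : Fin n → ℚ) : ℚ) : K) :=
  dif_pos h

theorem elems_of_nonpos {u : Γ} (h : ¬ 0 < pairQ ρ (u : Fin n → ℚ)) :
    elems (K := K) Γ ρ e hi u = 0 :=
  dif_neg h

/-- The Demazure derivation as a linear map. -/
noncomputable def demLin : AddMonoidAlgebra K Γ →ₗ[K] AddMonoidAlgebra K Γ :=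
  (Finsupp.lsum K fun u => LinearMap.id.smulRight (elems (K := K) Γ ρ e hi u)) ∘ₗ
    (AddMonoidAlgebra.coeffLinearEquiv K).toLinearMap

theorem demLin_single (u : Γ) (b : K) :
    demLin K Γ ρ e hi (AddMonoidAlgebra.single u b) = b • elems (K := K) Γ ρ e hi u := by
  rw [demLin, LinearMap.comp_apply, LinearEquiv.coe_coe, AddMonoidAlgebra.coeffLinearEquiv_apply,
    AddMonoidAlgebra.coeff_single]
  erw [Finsupp.lsum_single]
  rw [LinearMap.smulRight_apply, LinearMap.id_apply]

theorem elems_mul (hnn : ∀ u : Γ, 0 ≤ pairQ ρ (u : Fin n → ℚ)) (u v : Γ) :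
    elems (K := K) Γ ρ e hi (u + v) =
      AddMonoidAlgebra.single u (1 : K) * elems (K := K) Γ ρ e hi v
        + AddMonoidAlgebra.single v (1 : K) * elems (K := K) Γ ρ e hi u := by
  have hco : ((u + v : Γ) : Fin n → ℚ) = (u : Fin n → ℚ) + (v : Fin n → ℚ) := rfl
  have hps : pairQ ρ ((u + v : Γ) : Fin n → ℚ)
      = pairQ ρ (u : Fin n → ℚ) + pairQ ρ (v : Fin n → ℚ) := by
    rw [hco, pairQ_add_right]
  rcases (hnn u).lt_or_eq with hu | hu <;> rcases (hnn v).lt_or_eq with hv | hv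
  · -- both positive
    have hpuv : 0 < pairQ ρ ((u + v : Γ) : Fin n → ℚ) := by rw [hps]; linarith
    rw [elems_of_pos K Γ ρ e hi hpuv, elems_of_pos K Γ ρ e hi hu, elems_of_pos K Γ ρ e hi hv,
      AddMonoidAlgebra.single_mul_single, AddMonoidAlgebra.single_mul_single, one_mul, one_mul]
    have hidx1 : (u + (⟨↑v + e, hi v hv⟩ : Γ)) = (⟨↑(u + v) + e, hi (u + v) hpuv⟩ : Γ) :=
      Subtype.ext (by
        show (u : Fin n → ℚ) + ((v : Fin n → ℚ) + e)
          = ((u : Fin n → ℚ) + (v : Fin n → ℚ)) + e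
        abel)
    have hidx2 : (v + (⟨↑u + e, hi u hu⟩ : Γ)) = (⟨↑(u + v) + e, hi (u + v) hpuv⟩ : Γ) :=
      Subtype.ext (by
        show (v : Fin n → ℚ) + ((u : Fin n → ℚ) + e)
          = ((u : Fin n → ℚ) + (v : Fin n → ℚ)) + e
        abel)
    rw [hidx1, hidx2, ← AddMonoidAlgebra.single_add]
    congr 1
    rw [hps]
    push_cast
    ring
  · -- hu pos, hv zero
    have hpuv : 0 < pairQ ρ ((u + v : Γ) : Fin n → ℚ) := by rw [hps, ← hv]; linarith
    have hvne : ¬ 0 < pairQ ρ (v : Fin n → ℚ) := by rw [← hv]; exact lt_irrefl 0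
    rw [elems_of_pos K Γ ρ e hi hpuv, elems_of_pos K Γ ρ e hi hu,
      elems_of_nonpos K Γ ρ e hi hvne, mul_zero, zero_add,
      AddMonoidAlgebra.single_mul_single, one_mul]
    have hidx2 : (v + (⟨↑u + e, hi u hu⟩ : Γ)) = (⟨↑(u + v) + e, hi (u + v) hpuv⟩ : Γ) :=
      Subtype.ext (by
        show (v : Fin n → ℚ) + ((u : Fin n → ℚ) + e)
          = ((u : Fin n → ℚ) + (v : Fin n → ℚ)) + e
        abel)
    rw [hidx2]
    congr 1
    rw [hps, ← hv, add_zero]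
  · -- hu zero, hv pos
    have hpuv : 0 < pairQ ρ ((u + v : Γ) : Fin n → ℚ) := by rw [hps, ← hu]; linarith
    have hune : ¬ 0 < pairQ ρ (u : Fin n → ℚ) := by rw [← hu]; exact lt_irrefl 0
    rw [elems_of_pos K Γ ρ e hi hpuv, elems_of_pos K Γ ρ e hi hv,
      elems_of_nonpos K Γ ρ e hi hune, mul_zero, add_zero,
      AddMonoidAlgebra.single_mul_single, one_mul]
    have hidx1 : (u + (⟨↑v + e, hi v hv⟩ : Γ)) = (⟨↑(u + v) + e, hi (u + v) hpuv⟩ : Γ) :=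
      Subtype.ext (by
        show (u : Fin n → ℚ) + ((v : Fin n → ℚ) + e)
          = ((u : Fin n → ℚ) + (v : Fin n → ℚ)) + e
        abel)
    rw [hidx1]
    congr 1
    rw [hps, ← hu, zero_add]
  · -- both zero
    have hne : ¬ 0 < pairQ ρ ((u + v : Γ) : Fin n → ℚ) := by
      rw [hps, ← hu, ← hv]; norm_num
    have hune : ¬ 0 < pairQ ρ (u : Fin n → ℚ) := by rw [← hu]; exact lt_irrefl 0
    have hvne : ¬ 0 < pairQ ρ (v : Fin n → ℚ) := by rw [← hv]; exact lt_irrefl 0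
    rw [elems_of_nonpos K Γ ρ e hi hne, elems_of_nonpos K Γ ρ e hi hune,
      elems_of_nonpos K Γ ρ e hi hvne, mul_zero, mul_zero, add_zero]

/-- The Demazure derivation. -/
noncomputable def demDeriv (hnn : ∀ u : Γ, 0 ≤ pairQ ρ (u : Fin n → ℚ)) :
    Derivation K (AddMonoidAlgebra K Γ) (AddMonoidAlgebra K Γ) where
  toLinearMap := demLin K Γ ρ e hi
  map_one_eq_zero' := by
    have h1 : (1 : AddMonoidAlgebra K Γ) = AddMonoidAlgebra.single (0 : Γ) (1 : K) :=
      AddMonoidAlgebra.one_def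
    show demLin K Γ ρ e hi 1 = 0
    rw [h1, demLin_single, one_smul, elems_of_nonpos]
    have hc0 : ((0 : Γ) : Fin n → ℚ) = 0 := rfl
    rw [hc0, pairQ_zero_right]
    exact lt_irrefl 0
  leibniz' := by
    intro a b
    have key : ∀ (u v : Γ) (bb cc : K),
        demLin K Γ ρ e hi (AddMonoidAlgebra.single u bb * AddMonoidAlgebra.single v cc) =
          AddMonoidAlgebra.single u bb * demLin K Γ ρ e hi (AddMonoidAlgebra.single v cc)
            + AddMonoidAlgebra.single v cc * demLin K Γ ρ e hi (AddMonoidAlgebra.single u bb) := by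
      intro u v bb cc
      rw [AddMonoidAlgebra.single_mul_single, demLin_single, demLin_single, demLin_single,
        elems_mul K Γ ρ e hi hnn u v, smul_add]
      have hbb : (AddMonoidAlgebra.single u bb : AddMonoidAlgebra K Γ)
          = bb • AddMonoidAlgebra.single u (1 : K) := by
        rw [AddMonoidAlgebra.smul_single', mul_one]
      have hcc : (AddMonoidAlgebra.single v cc : AddMonoidAlgebra K Γ)
          = cc • AddMonoidAlgebra.single v (1 : K) := by
        rw [AddMonoidAlgebra.smul_single', mul_one]
      rw [hbb, hcc, smul_mul_assoc, smul_mul_assoc, mul_smul_comm, mul_smul_comm,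
        smul_smul, smul_smul, mul_comm cc bb]
    show demLin K Γ ρ e hi (a * b)
        = a • demLin K Γ ρ e hi b + b • demLin K Γ ρ e hi a
    have hbil : (LinearMap.mul K (AddMonoidAlgebra K Γ)).compr₂ (demLin K Γ ρ e hi)
        = (LinearMap.mul K (AddMonoidAlgebra K Γ)).compl₂ (demLin K Γ ρ e hi)
          + ((LinearMap.mul K (AddMonoidAlgebra K Γ)).compl₂ (demLin K Γ ρ e hi)).flip := by
      apply AddMonoidAlgebra.lhom_ext'
      intro u
      apply LinearMap.ext
      intro bb
      apply AddMonoidAlgebra.lhom_ext'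
      intro v
      apply LinearMap.ext
      intro cc
      have := key u v bb cc
      simpa only [LinearMap.comp_apply, AddMonoidAlgebra.lsingle_apply, LinearMap.compr₂_apply, LinearMap.compl₂_apply, LinearMap.add_apply,
        LinearMap.flip_apply, LinearMap.mul_apply'] using this
    have h2 := LinearMap.congr_fun (LinearMap.congr_fun hbil a) b
    simpa only [LinearMap.compr₂_apply, LinearMap.compl₂_apply, LinearMap.add_apply,
      LinearMap.flip_apply, LinearMap.mul_apply', smul_eq_mul] using h2

theorem demDeriv_single_one (hnn : ∀ u : Γ, 0 ≤ pairQ ρ (u : Fin n → ℚ)) (u : Γ) :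
    demDeriv K Γ ρ e hi hnn (AddMonoidAlgebra.single u (1 : K))
      = elems (K := K) Γ ρ e hi u := by
  show demLin K Γ ρ e hi (AddMonoidAlgebra.single u (1 : K)) = _
  rw [demLin_single, one_smul]

end Deriv


/-- Let `𝒢 = C` be a finitely generated convex cone of full dimension in `M_ℚ`,
`Γ = M ∩ 𝒢` and `A = K[Γ]` the monoid algebra with basis `χ^u = single u 1`.
Let `ρ ∈ ℰ¹` and `e ∈ ℜ_ρ(ℰ)`.  Then:
(i) for every `u ∈ Γ` with `⟨ρ, u⟩ > 0` one has `u + e ∈ Γ`;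
(ii) there is a unique `K`-derivation `∂_e` of `A` with
`∂_e(χ^u) = ⟨ρ, u⟩ χ^{u+e}` when `⟨ρ, u⟩ > 0` and `∂_e(χ^u) = 0` when
`⟨ρ, u⟩ = 0`; moreover `∂_e` is homogeneous of degree `e`: it maps `K·χ^u`
into `K·χ^{u+e}` for every `u ∈ Γ`. -/
theorem demazure_derivation_exists_unique {n : ℕ} {K : Type*} [Field K] [CharZero K]
    (C : Set (Fin n → ℚ)) (hfg : IsFGCone C) (hfull : Submodule.span ℚ C = ⊤)
    (Γ : AddSubmonoid (Fin n → ℚ))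
    (hΓ : (Γ : Set (Fin n → ℚ)) = {v | IsLatticePt v ∧ v ∈ C})
    (ρ e : Fin n → ℚ) (hρ : ρ ∈ E1 C) (he : e ∈ DemRootsAt C ρ) :
    (∀ u : Γ, 0 < pairQ ρ ↑u → (↑u + e : Fin n → ℚ) ∈ Γ) ∧
    (∃! D : Derivation K (AddMonoidAlgebra K Γ) (AddMonoidAlgebra K Γ),
      ∀ u : Γ,
        (∀ h : (↑u + e : Fin n → ℚ) ∈ Γ, 0 < pairQ ρ ↑u →
          D (AddMonoidAlgebra.single u 1) =
            AddMonoidAlgebra.single (⟨↑u + e, h⟩ : Γ) ((pairQ ρ ↑u : ℚ) : K)) ∧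
        (pairQ ρ ↑u = 0 → D (AddMonoidAlgebra.single u 1) = 0)) ∧
    (∀ D : Derivation K (AddMonoidAlgebra K Γ) (AddMonoidAlgebra K Γ),
      (∀ u : Γ,
        (∀ h : (↑u + e : Fin n → ℚ) ∈ Γ, 0 < pairQ ρ ↑u →
          D (AddMonoidAlgebra.single u 1) =
            AddMonoidAlgebra.single (⟨↑u + e, h⟩ : Γ) ((pairQ ρ ↑u : ℚ) : K)) ∧
        (pairQ ρ ↑u = 0 → D (AddMonoidAlgebra.single u 1) = 0)) →
      ∀ u : Γ, D (AddMonoidAlgebra.single u 1) ∈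
        Submodule.span K {x : AddMonoidAlgebra K Γ |
          ∃ h : (↑u + e : Fin n → ℚ) ∈ Γ,
            x = AddMonoidAlgebra.single (⟨↑u + e, h⟩ : Γ) (1 : K)}) := by
  classical
  obtain ⟨S, hC⟩ := hfg
  have hmemΓ : ∀ v : Fin n → ℚ, v ∈ Γ ↔ IsLatticePt v ∧ v ∈ C := by
    intro v
    rw [← SetLike.mem_coe, hΓ]
    exact Iff.rfl
  have hi : ∀ u : Γ, 0 < pairQ ρ (u : Fin n → ℚ) → ((u : Fin n → ℚ) + e) ∈ Γ := by
    intro u hpos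
    have hu := (hmemΓ u).1 u.2
    have h2 := root_translate C S hC hfull ρ e hρ he hu.2 hu.1 hpos
    exact (hmemΓ _).2 h2
  have hnn : ∀ u : Γ, 0 ≤ pairQ ρ (u : Fin n → ℚ) := fun u =>
    mem_dualCone_of_mem_E1 hρ (u : Fin n → ℚ) ((hmemΓ u).1 u.2).2
  have hval : ∀ D : Derivation K (AddMonoidAlgebra K Γ) (AddMonoidAlgebra K Γ),
      (∀ u : Γ,
        (∀ h : (↑u + e : Fin n → ℚ) ∈ Γ, 0 < pairQ ρ ↑u →
          D (AddMonoidAlgebra.single u 1) =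
            AddMonoidAlgebra.single (⟨↑u + e, h⟩ : Γ) ((pairQ ρ ↑u : ℚ) : K)) ∧
        (pairQ ρ ↑u = 0 → D (AddMonoidAlgebra.single u 1) = 0)) →
      ∀ u : Γ, D (AddMonoidAlgebra.single u 1) = elems (K := K) Γ ρ e hi u := by
    intro D hD u
    rcases (hnn u).lt_or_eq with hpos | h0
    · rw [(hD u).1 (hi u hpos) hpos, elems_of_pos K Γ ρ e hi hpos]
    · rw [(hD u).2 h0.symm, elems_of_nonpos K Γ ρ e hi (by rw [← h0]; exact lt_irrefl 0)]
  refine ⟨hi, ?_, ?_⟩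
  · refine ⟨demDeriv K Γ ρ e hi hnn, ?_, ?_⟩
    · intro u
      refine ⟨?_, ?_⟩
      · intro h hpos
        rw [demDeriv_single_one, elems_of_pos K Γ ρ e hi hpos]
      · intro h0
        rw [demDeriv_single_one,
          elems_of_nonpos K Γ ρ e hi (by rw [h0]; exact lt_irrefl 0)]
    · intro D hD
      have hlin : D.toLinearMap = (demDeriv K Γ ρ e hi hnn).toLinearMap := by
        apply AddMonoidAlgebra.lhom_ext'
        intro u
        apply LinearMap.ext
        intro b
        have h1 : (AddMonoidAlgebra.single u b : AddMonoidAlgebra K Γ)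
            = b • AddMonoidAlgebra.single u (1 : K) := by
          rw [AddMonoidAlgebra.smul_single', mul_one]
        show D (AddMonoidAlgebra.single u b)
          = demDeriv K Γ ρ e hi hnn (AddMonoidAlgebra.single u b)
        rw [h1, Derivation.map_smul, Derivation.map_smul, hval D hD u, demDeriv_single_one]
      exact Derivation.ext fun a => LinearMap.congr_fun hlin a
  · intro D hD u
    rcases (hnn u).lt_or_eq with hpos | h0
    · rw [hval D hD u, elems_of_pos K Γ ρ e hi hpos]
      have h2 : AddMonoidAlgebra.single (⟨↑u + e, hi u hpos⟩ : Γ)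
            ((pairQ ρ (u : Fin n → ℚ) : ℚ) : K)
          = ((pairQ ρ (u : Fin n → ℚ) : ℚ) : K) •
            AddMonoidAlgebra.single (⟨↑u + e, hi u hpos⟩ : Γ) (1 : K) := by
        rw [AddMonoidAlgebra.smul_single', mul_one]
      rw [h2]
      exact Submodule.smul_mem _ _ (Submodule.subset_span ⟨hi u hpos, rfl⟩)
    · rw [(hD u).2 h0.symm]
      exact Submodule.zero_mem _


end RootSubgroups
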